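/- arXiv:2507.00820 — 10 statements merged into one kernel-verified Lean document; each statement's English description precedes it below -/
import Mathlib

section
/- Let (g_n)_{n∈ℤ} be a square-summable sequence of complex numbers and fix ζ > 0. For ε > 0 and n ∈ ℤ define a_n(ε) := exp(−i(2πζ/ε²)·√(1−(nε)²)) if |n|·ε ≤ 1 and a_n(ε) := exp(−(2πζ/ε²)·√((nε)²−1)) if |n|·ε > 1, and define b_n(ε) := exp(−2πiζ/ε² + iπζn²). Then lim_{ε→0⁺} Σ_{n∈ℤ} |g_n|² · |a_n(ε) − b_n(ε)|² = 0. -/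
/-!
Since `‖a n ε‖ ≤ 1` (the evanescent modes decay because `ζ > 0`) and `‖b n ε‖ = 1`, every term
is at most `4 ‖g n‖ ^ 2`, so by dominated convergence it suffices that `a n ε - b n ε → 0` for
each fixed `n`. For `ε` small the mode `n` propagates, and the phases of `a n ε` and `b n ε`
differ by `2πζ ((1 - √(1 - (nε)²)) / ε² - n² / 2)`, which tends to `0` because
`1 - √(1 - x²) = x² / (1 + √(1 - x²))`: this is the Fresnel approximation of the square root.
-/

open Filter Topology

section

open Complex

lemma norm_exp_ofReal_mul_I_sub_exp_ofReal_mul_I_le (x y : ℝ) :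
    ‖exp (x * I) - exp (y * I)‖ ≤ |x - y| := by
  have h : exp (x * I) = exp (y * I) * exp (I * (x - y : ℝ)) := by
    rw [← exp_add]; push_cast; ring_nf
  rw [h, ← mul_sub_one, norm_mul, norm_exp_ofReal_mul_I, one_mul]
  exact Real.norm_exp_I_mul_ofReal_sub_one_le

lemma tendsto_tsum_norm_sq_mul_norm_sq {ι α E F : Type*} [NormedAddCommGroup E]
    [NormedAddCommGroup F] {l : Filter α} {g : ι → E} {u : ι → α → F} {C : ℝ}
    (hg : Summable fun n => ‖g n‖ ^ 2) (hu : ∀ n x, ‖u n x‖ ≤ C)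
    (hlim : ∀ n, Tendsto (u n) l (𝓝 0)) :
    Tendsto (fun x => ∑' n, ‖g n‖ ^ 2 * ‖u n x‖ ^ 2) l (𝓝 0) := by
  have hpt (n : ι) : Tendsto (fun x => ‖g n‖ ^ 2 * ‖u n x‖ ^ 2) l (𝓝 0) := by
    simpa using ((hlim n).norm.pow 2).const_mul (‖g n‖ ^ 2)
  have hbound : ∀ᶠ x in l, ∀ n, ‖‖g n‖ ^ 2 * ‖u n x‖ ^ 2‖ ≤ ‖g n‖ ^ 2 * C ^ 2 :=
    Eventually.of_forall fun x n => by
      rw [Real.norm_of_nonneg (by positivity)]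
      gcongr
      exact hu n x
  simpa using tendsto_tsum_of_dominated_convergence (hg.mul_right (C ^ 2)) hpt hbound

lemma tendsto_one_sub_sqrt_one_sub_sq_div_sq (t : ℝ) :
    Tendsto (fun ε : ℝ => (1 - √(1 - (t * ε) ^ 2)) / ε ^ 2) (𝓝[≠] 0) (𝓝 (t ^ 2 / 2)) := by
  have hcont : Tendsto (fun ε : ℝ => t ^ 2 / (1 + √(1 - (t * ε) ^ 2))) (𝓝 0) (𝓝 (t ^ 2 / 2)) := by
    have : ContinuousAt (fun ε : ℝ => t ^ 2 / (1 + √(1 - (t * ε) ^ 2))) 0 :=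
      continuousAt_const.div (by fun_prop) (by positivity)
    simpa [one_add_one_eq_two] using this.tendsto
  have hsmall : ∀ᶠ ε in 𝓝 (0 : ℝ), (t * ε) ^ 2 < 1 :=
    (show ContinuousAt (fun ε : ℝ => (t * ε) ^ 2) 0 by fun_prop).eventually_lt
      continuousAt_const (by simp)
  refine (hcont.mono_left nhdsWithin_le_nhds).congr' ?_
  filter_upwards [nhdsWithin_le_nhds hsmall, self_mem_nhdsWithin] with ε hε hne
  have hε0 : ε ≠ 0 := hne
  have hs : √(1 - (t * ε) ^ 2) ^ 2 = 1 - (t * ε) ^ 2 := Real.sq_sqrt (by linarith)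
  have hs0 : 0 ≤ √(1 - (t * ε) ^ 2) := Real.sqrt_nonneg _
  rw [div_eq_div_iff (by positivity) (by positivity)]
  linear_combination hs

noncomputable def helmholtzPhase (ζ t ε : ℝ) : ℝ :=
  -(2 * Real.pi * ζ / ε ^ 2) * √(1 - (t * ε) ^ 2)

noncomputable def paraxialPhase (ζ t ε : ℝ) : ℝ :=
  -(2 * Real.pi * ζ / ε ^ 2) + Real.pi * ζ * t ^ 2

lemma exp_helmholtzPhase_mul_I (ζ t ε : ℝ) : exp (helmholtzPhase ζ t ε * I) =
    exp (-I * ((2 * Real.pi * ζ / ε ^ 2) * √(1 - (t * ε) ^ 2))) := by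
  simp only [helmholtzPhase]; push_cast; ring_nf

lemma exp_paraxialPhase_mul_I (ζ t ε : ℝ) : exp (paraxialPhase ζ t ε * I) =
    exp (-(2 * Real.pi * ζ / ε ^ 2) * I + Real.pi * ζ * (t : ℂ) ^ 2 * I) := by
  simp only [paraxialPhase]; push_cast; ring_nf

lemma tendsto_helmholtzPhase_sub_paraxialPhase (ζ t : ℝ) :
    Tendsto (fun ε => helmholtzPhase ζ t ε - paraxialPhase ζ t ε) (𝓝[≠] 0) (𝓝 0) := by
  convert ((tendsto_one_sub_sqrt_one_sub_sq_div_sq t).const_mul (2 * Real.pi * ζ)).sub_const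
    (Real.pi * ζ * t ^ 2) using 1
  · ext ε
    simp only [helmholtzPhase, paraxialPhase]
    ring
  · congr 1
    ring

lemma tendsto_exp_helmholtzPhase_sub_exp_paraxialPhase (ζ t : ℝ) :
    Tendsto (fun ε => exp (helmholtzPhase ζ t ε * I) - exp (paraxialPhase ζ t ε * I))
      (𝓝[≠] 0) (𝓝 0) := by
  rw [tendsto_zero_iff_norm_tendsto_zero]
  exact squeeze_zero (fun _ => norm_nonneg _)
    (fun ε => norm_exp_ofReal_mul_I_sub_exp_ofReal_mul_I_le _ _)
    (by simpa using (tendsto_helmholtzPhase_sub_paraxialPhase ζ t).abs)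

end

theorem paraxial_limit_parseval (g : ℤ → ℂ) (hg : Summable fun n : ℤ => ‖g n‖ ^ 2)
    (ζ : ℝ) (hζ : 0 < ζ)
    (a b : ℤ → ℝ → ℂ)
    (ha : ∀ (n : ℤ) (ε : ℝ), a n ε =
      if |(n : ℝ)| * ε ≤ 1 then
        Complex.exp (-Complex.I * ((2 * Real.pi * ζ / ε ^ 2) *
          Real.sqrt (1 - ((n : ℝ) * ε) ^ 2)))
      else
        Complex.exp (-((2 * Real.pi * ζ / ε ^ 2) *
          Real.sqrt (((n : ℝ) * ε) ^ 2 - 1)) : ℝ))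
    (hb : ∀ (n : ℤ) (ε : ℝ), b n ε =
      Complex.exp (-(2 * Real.pi * ζ / ε ^ 2) * Complex.I +
        Real.pi * ζ * (n : ℂ) ^ 2 * Complex.I)) :
    Tendsto (fun ε : ℝ => ∑' n : ℤ, ‖g n‖ ^ 2 * ‖a n ε - b n ε‖ ^ 2)
      (nhdsWithin 0 (Set.Ioi 0)) (nhds 0) := by
  have ha_le (n : ℤ) (ε : ℝ) : ‖a n ε‖ ≤ 1 := by
    rw [ha]
    split_ifs
    · rw [← exp_helmholtzPhase_mul_I, Complex.norm_exp_ofReal_mul_I]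
    · rw [Complex.norm_exp_ofReal, Real.exp_le_one_iff, neg_nonpos]
      positivity
  have hb_norm (n : ℤ) (ε : ℝ) : ‖b n ε‖ = 1 := by
    rw [hb, ← Complex.ofReal_intCast, ← exp_paraxialPhase_mul_I, Complex.norm_exp_ofReal_mul_I]
  have hbound (n : ℤ) (ε : ℝ) : ‖a n ε - b n ε‖ ≤ 2 :=
    (norm_sub_le _ _).trans (by linarith [ha_le n ε, hb_norm n ε])
  have hlim (n : ℤ) : Tendsto (fun ε => a n ε - b n ε) (𝓝[>] 0) (𝓝 0) := by
    have hsmall : ∀ᶠ ε in 𝓝 (0 : ℝ), |(n : ℝ)| * ε < 1 :=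
      (show ContinuousAt (fun ε : ℝ => |(n : ℝ)| * ε) 0 by fun_prop).eventually_lt
        continuousAt_const (by simp)
    refine ((tendsto_exp_helmholtzPhase_sub_exp_paraxialPhase ζ n).mono_left
      (nhdsGT_le_nhdsNE 0)).congr' ?_
    filter_upwards [nhdsWithin_le_nhds hsmall] with ε hε
    rw [ha, hb, if_pos hε.le, exp_helmholtzPhase_mul_I, exp_paraxialPhase_mul_I,
      Complex.ofReal_intCast]
  exact tendsto_tsum_norm_sq_mul_norm_sq hg hbound hlim
end

section
/- Let (g_n)_{n∈ℤ} be an absolutely summable sequence of complex numbers and fix ζ > 0. For ε > 0 define U_ε(ξ) := Σ_{n∈ℤ} g_n a_n(ε) e^{2πinξ}, where a_n(ε) := exp(−i(2πζ/ε²)·√(1−(nε)²)) if |n|·ε ≤ 1 and a_n(ε) := exp(−(2πζ/ε²)·√((nε)²−1)) if |n|·ε > 1, and define U_Par,ε(ξ) := e^{−2πiζ/ε²} Σ_{n∈ℤ} g_n e^{2πinξ + iπζn²}. Then lim_{ε→0⁺} ∫₀¹ |U_ε(ξ) − U_Par,ε(ξ)|² dξ = 0. -/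
open Filter Topology

/-!
With `x = (nε)²` and `c = 2πζ/ε²`, the `n`-th Helmholtz phase factor is `exp (-i c √(1 - x))` as
soon as `|n| ε ≤ 1`, while the paraxial one is `exp (-i c (1 - x/2))`. The phases differ by at
most `c x² / 2 = πζ n⁴ ε²`, so each mode converges as `ε → 0⁺`. Since `ζ > 0`, all factors have
modulus at most `1` (evanescent modes decay), so `2 |g n|` dominates the modewise errors and
`sup_ξ |U_ε ξ - U_Par,ε ξ| ≤ ∑ |g n| |helmholtz_n(ε) - paraxial_n(ε)| → 0` by dominated
convergence. The integral over one period is at most the square of this supremum.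
-/

section WeightedSeries

variable {α ι R : Type*} [NormedRing R] {g : ι → R}

lemma norm_sub_le_two_of_norm_le_one {a b : R} (ha : ‖a‖ ≤ 1) (hb : ‖b‖ ≤ 1) : ‖a - b‖ ≤ 2 :=
  (norm_sub_le a b).trans (by linarith)

lemma summable_norm_mul_norm_sub {a b : ι → R} (hg : Summable (‖g ·‖))
    (ha : ∀ n, ‖a n‖ ≤ 1) (hb : ∀ n, ‖b n‖ ≤ 1) :
    Summable fun n => ‖g n‖ * ‖a n - b n‖ :=
  (hg.mul_right 2).of_nonneg_of_le (fun _ => by positivity) fun n =>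
    mul_le_mul_of_nonneg_left (norm_sub_le_two_of_norm_le_one (ha n) (hb n)) (norm_nonneg _)

lemma norm_tsum_mul_mul_sub_tsum_mul_mul_le [CompleteSpace R] {a b e : ι → R}
    (hg : Summable (‖g ·‖))
    (ha : ∀ n, ‖a n‖ ≤ 1) (hb : ∀ n, ‖b n‖ ≤ 1) (he : ∀ n, ‖e n‖ ≤ 1) :
    ‖∑' n, g n * a n * e n - ∑' n, g n * b n * e n‖ ≤ ∑' n, ‖g n‖ * ‖a n - b n‖ := by
  have summable_of_norm_le_one {c : ι → R} (hc : ∀ n, ‖c n‖ ≤ 1) :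
      Summable fun n => g n * c n * e n :=
    Summable.of_norm_bounded hg fun n => calc
      ‖g n * c n * e n‖ ≤ ‖g n‖ * ‖c n‖ * ‖e n‖ := norm_mul₃_le
      _ ≤ ‖g n‖ * 1 * 1 := by gcongr <;> simp [hc n, he n]
      _ = ‖g n‖ := by ring
  rw [← (summable_of_norm_le_one ha).tsum_sub (summable_of_norm_le_one hb)]
  refine tsum_of_norm_bounded (summable_norm_mul_norm_sub hg ha hb).hasSum fun n => ?_
  calc ‖g n * a n * e n - g n * b n * e n‖ = ‖g n * (a n - b n) * e n‖ := by noncomm_ring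
    _ ≤ ‖g n‖ * ‖a n - b n‖ * ‖e n‖ := norm_mul₃_le
    _ ≤ ‖g n‖ * ‖a n - b n‖ * 1 := by gcongr; exact he n
    _ = ‖g n‖ * ‖a n - b n‖ := mul_one _

lemma tendsto_tsum_norm_mul_norm_sub {l : Filter α} {a b : α → ι → R} (hg : Summable (‖g ·‖))
    (ha : ∀ x n, ‖a x n‖ ≤ 1) (hb : ∀ x n, ‖b x n‖ ≤ 1)
    (hab : ∀ n, Tendsto (fun x => a x n - b x n) l (𝓝 0)) :
    Tendsto (fun x => ∑' n, ‖g n‖ * ‖a x n - b x n‖) l (𝓝 0) := by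
  simpa using tendsto_tsum_of_dominated_convergence
    (f := fun x n => ‖g n‖ * ‖a x n - b x n‖) (g := fun _ => 0) (hg.mul_right 2)
    (fun n => by simpa using ((hab n).norm.const_mul ‖g n‖))
    (Eventually.of_forall fun x n => by
      rw [Real.norm_of_nonneg (by positivity)]
      exact mul_le_mul_of_nonneg_left
        (norm_sub_le_two_of_norm_le_one (ha x n) (hb x n)) (norm_nonneg _))

end WeightedSeries

lemma norm_exp_I_mul_ofReal_sub_exp_I_mul_ofReal_le (x y : ℝ) :
    ‖Complex.exp (Complex.I * x) - Complex.exp (Complex.I * y)‖ ≤ |x - y| := by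
  have hfactor : Complex.exp (Complex.I * x) - Complex.exp (Complex.I * y) =
      Complex.exp (Complex.I * y) * (Complex.exp (Complex.I * ((x - y : ℝ) : ℂ)) - 1) := by
    rw [mul_sub, ← Complex.exp_add, mul_one]
    push_cast
    ring_nf
  rw [hfactor, norm_mul, mul_comm Complex.I, Complex.norm_exp_ofReal_mul_I, one_mul]
  exact Real.norm_exp_I_mul_ofReal_sub_one_le

lemma abs_sqrt_one_sub_sub_le {x : ℝ} (hx₀ : 0 ≤ x) (hx₁ : x ≤ 1) :
    |√(1 - x) - (1 - x / 2)| ≤ x ^ 2 / 2 := by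
  set s := √(1 - x)
  have hs : s ^ 2 = 1 - x := Real.sq_sqrt (by linarith)
  have hs₀ : 0 ≤ s := Real.sqrt_nonneg _
  rw [abs_le]
  constructor <;> nlinarith [sq_nonneg (1 - s), mul_nonneg hs₀ (sq_nonneg (1 - s))]

noncomputable def helmholtzFactor (ζ : ℝ) (n : ℤ) (ε : ℝ) : ℂ :=
  if |(n : ℝ)| * ε ≤ 1 then
    Complex.exp (-Complex.I * ((2 * Real.pi * ζ / ε ^ 2) *
      Real.sqrt (1 - ((n : ℝ) * ε) ^ 2)))
  else
    Complex.exp (-((2 * Real.pi * ζ / ε ^ 2) *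
      Real.sqrt (((n : ℝ) * ε) ^ 2 - 1)) : ℝ)

noncomputable def paraxialFactor (ζ : ℝ) (n : ℤ) (ε : ℝ) : ℂ :=
  Complex.exp (Complex.I * ((Real.pi * ζ * n ^ 2 - 2 * Real.pi * ζ / ε ^ 2 : ℝ) : ℂ))

lemma helmholtzFactor_of_abs_mul_le_one {ζ ε : ℝ} {n : ℤ} (hn : |(n : ℝ)| * ε ≤ 1) :
    helmholtzFactor ζ n ε = Complex.exp
      (Complex.I * ((-(2 * Real.pi * ζ / ε ^ 2 * √(1 - ((n : ℝ) * ε) ^ 2)) : ℝ) : ℂ)) := by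
  rw [helmholtzFactor, if_pos hn]
  push_cast
  ring_nf

lemma norm_helmholtzFactor_le_one {ζ : ℝ} (hζ : 0 ≤ ζ) (n : ℤ) (ε : ℝ) :
    ‖helmholtzFactor ζ n ε‖ ≤ 1 := by
  by_cases hn : |(n : ℝ)| * ε ≤ 1
  · rw [helmholtzFactor_of_abs_mul_le_one hn, mul_comm, Complex.norm_exp_ofReal_mul_I]
  · rw [helmholtzFactor, if_neg hn, Complex.norm_exp_ofReal, Real.exp_le_one_iff, neg_nonpos]
    positivity

lemma paraxialFactor_eq_exp_mul_exp (ζ : ℝ) (n : ℤ) (ε : ℝ) :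
    paraxialFactor ζ n ε = Complex.exp (-(2 * Real.pi * ζ / ε ^ 2) * Complex.I) *
      Complex.exp (Complex.I * Real.pi * ζ * (n : ℂ) ^ 2) := by
  rw [paraxialFactor, ← Complex.exp_add]
  push_cast
  ring_nf

lemma norm_paraxialFactor (ζ : ℝ) (n : ℤ) (ε : ℝ) : ‖paraxialFactor ζ n ε‖ = 1 := by
  rw [paraxialFactor, mul_comm, Complex.norm_exp_ofReal_mul_I]

lemma norm_helmholtzFactor_sub_paraxialFactor_le {ζ ε : ℝ} {n : ℤ} (hε : 0 < ε)
    (hn : |(n : ℝ)| * ε ≤ 1) :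
    ‖helmholtzFactor ζ n ε - paraxialFactor ζ n ε‖ ≤ Real.pi * |ζ| * (n : ℝ) ^ 4 * ε ^ 2 := by
  set x := ((n : ℝ) * ε) ^ 2
  have hx₁ : x ≤ 1 := by
    rw [show x = (|(n : ℝ)| * ε) ^ 2 by rw [mul_pow, sq_abs, ← mul_pow]]
    exact pow_le_one₀ (by positivity) hn
  have hphase : -(2 * Real.pi * ζ / ε ^ 2 * √(1 - x)) -
      (Real.pi * ζ * n ^ 2 - 2 * Real.pi * ζ / ε ^ 2) =
      -(2 * Real.pi * ζ / ε ^ 2) * (√(1 - x) - (1 - x / 2)) := by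
    field_simp
    ring
  rw [helmholtzFactor_of_abs_mul_le_one hn, paraxialFactor]
  refine (norm_exp_I_mul_ofReal_sub_exp_I_mul_ofReal_le _ _).trans ?_
  rw [hphase, abs_mul, abs_neg]
  calc |2 * Real.pi * ζ / ε ^ 2| * |√(1 - x) - (1 - x / 2)|
      ≤ |2 * Real.pi * ζ / ε ^ 2| * (x ^ 2 / 2) := by
        gcongr
        exact abs_sqrt_one_sub_sub_le (by positivity) hx₁
    _ = Real.pi * |ζ| * (n : ℝ) ^ 4 * ε ^ 2 := by
        rw [abs_div, abs_mul, abs_mul, abs_of_pos Real.pi_pos, abs_two, abs_of_pos (pow_pos hε 2)]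
        simp only [x]
        field_simp

lemma tendsto_helmholtzFactor_sub_paraxialFactor (ζ : ℝ) (n : ℤ) :
    Tendsto (fun ε => helmholtzFactor ζ n ε - paraxialFactor ζ n ε) (𝓝[>] 0) (𝓝 0) := by
  have hbound : Tendsto (fun ε : ℝ => Real.pi * |ζ| * (n : ℝ) ^ 4 * ε ^ 2) (𝓝[>] 0) (𝓝 0) := by
    have : Continuous fun ε : ℝ => Real.pi * |ζ| * (n : ℝ) ^ 4 * ε ^ 2 := by fun_prop
    simpa using (this.tendsto 0).mono_left nhdsWithin_le_nhds
  have hmodes : ∀ᶠ ε in 𝓝[>] (0 : ℝ), 0 < ε ∧ |(n : ℝ)| * ε ≤ 1 := by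
    have : Tendsto (fun ε : ℝ => |(n : ℝ)| * ε) (𝓝[>] 0) (𝓝 0) := by
      simpa using ((continuous_const_mul |(n : ℝ)|).tendsto 0).mono_left nhdsWithin_le_nhds
    exact eventually_mem_nhdsWithin.and (this.eventually (eventually_le_nhds one_pos))
  refine squeeze_zero_norm' ?_ hbound
  filter_upwards [hmodes] with ε ⟨hε, hn⟩
  exact norm_helmholtzFactor_sub_paraxialFactor_le hε hn

theorem paraxial_limit_L2 (g : ℤ → ℂ) (hg : Summable fun n : ℤ => ‖g n‖)
    (ζ : ℝ) (hζ : 0 < ζ)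
    (U UPar : ℝ → ℝ → ℂ)
    (hU : ∀ (ε ξ : ℝ), U ε ξ = ∑' n : ℤ,
      g n *
        (if |(n : ℝ)| * ε ≤ 1 then
          Complex.exp (-Complex.I * ((2 * Real.pi * ζ / ε ^ 2) *
            Real.sqrt (1 - ((n : ℝ) * ε) ^ 2)))
        else
          Complex.exp (-((2 * Real.pi * ζ / ε ^ 2) *
            Real.sqrt (((n : ℝ) * ε) ^ 2 - 1)) : ℝ)) *
        Complex.exp (2 * Real.pi * Complex.I * (n : ℂ) * ξ))
    (hUPar : ∀ (ε ξ : ℝ), UPar ε ξ =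
      Complex.exp (-(2 * Real.pi * ζ / ε ^ 2) * Complex.I) *
        ∑' n : ℤ, g n * Complex.exp (2 * Real.pi * Complex.I * (n : ℂ) * ξ +
          Complex.I * Real.pi * ζ * (n : ℂ) ^ 2)) :
    Tendsto (fun ε : ℝ => ∫ ξ in (0:ℝ)..1, ‖U ε ξ - UPar ε ξ‖ ^ 2)
      (nhdsWithin 0 (Set.Ioi 0)) (nhds 0) := by
  set e : ℤ → ℝ → ℂ := fun n ξ => Complex.exp (2 * Real.pi * Complex.I * (n : ℂ) * ξ)
  have he : ∀ n ξ, ‖e n ξ‖ ≤ 1 := fun n ξ => by simp [e, Complex.norm_exp]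
  have hUPar' : ∀ ε ξ, UPar ε ξ = ∑' n, g n * paraxialFactor ζ n ε * e n ξ := fun ε ξ => by
    rw [hUPar, ← tsum_mul_left]
    refine tsum_congr fun n => ?_
    rw [paraxialFactor_eq_exp_mul_exp, Complex.exp_add]
    ring
  set S := fun ε => ∑' n, ‖g n‖ * ‖helmholtzFactor ζ n ε - paraxialFactor ζ n ε‖
  have hsup : ∀ ε ξ, ‖U ε ξ - UPar ε ξ‖ ≤ S ε := fun ε ξ => by
    rw [hU, hUPar']
    exact norm_tsum_mul_mul_sub_tsum_mul_mul_le hg (norm_helmholtzFactor_le_one hζ.le · ε)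
      (fun n => (norm_paraxialFactor ζ n ε).le) (he · ξ)
  have hS : Tendsto S (𝓝[>] 0) (𝓝 0) :=
    tendsto_tsum_norm_mul_norm_sub hg (fun ε n => norm_helmholtzFactor_le_one hζ.le n ε)
      (fun ε n => (norm_paraxialFactor ζ n ε).le) (tendsto_helmholtzFactor_sub_paraxialFactor ζ)
  have hL2 : ∀ ε, ‖∫ ξ in (0:ℝ)..1, ‖U ε ξ - UPar ε ξ‖ ^ 2‖ ≤ S ε ^ 2 := fun ε => by
    have hsq : ∀ ξ, ‖‖U ε ξ - UPar ε ξ‖ ^ 2‖ ≤ S ε ^ 2 := fun ξ => by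
      rw [norm_pow, norm_norm]
      exact pow_le_pow_left₀ (norm_nonneg _) (hsup ε ξ) 2
    simpa using intervalIntegral.norm_integral_le_of_norm_le_const
      fun ξ (_ : ξ ∈ Set.uIoc 0 1) => hsq ξ
  exact squeeze_zero_norm hL2 (by simpa using hS.pow 2)
end

section
/- Let (g_n)_{n∈ℤ} be a square-summable sequence of complex numbers and let ζ ∈ ℝ. For ε > 0 and integers n with |n| ≤ ⌊1/ε⌋ set θ_n(ε) := (2πζ/ε²)·(1 − √(1−(nε)²)) − πζn². Then lim_{ε→0⁺} Σ_{|n| ≤ ⌊1/ε⌋} |g_n|² · |exp(iθ_n(ε)) − 1|² = 0. -/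
/-!
Dominated convergence for the series `∑ₙ |gₙ|² |exp(iθₙ(ε)) - 1|²`: each term is at most `4|gₙ|²`,
and tends to `0` because `θₙ(ε) = 2πζn² / (1 + √(1 - (nε)²)) - πζn²` tends to `πζn² - πζn² = 0`.
-/

open Filter Topology

theorem tendsto_finset_sum_zero_of_dominated {α β G : Type*} {𝓕 : Filter α}
    [NormedAddCommGroup G] [CompleteSpace G] {f : α → β → G} {bound : β → ℝ}
    (s : α → Finset β) (h_sum : Summable bound) (hf : ∀ k, Tendsto (f · k) 𝓕 (𝓝 0))
    (h_bound : ∀ᶠ a in 𝓕, ∀ k, ‖f a k‖ ≤ bound k) :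
    Tendsto (fun a => ∑ k ∈ s a, f a k) 𝓕 (𝓝 0) := by
  have hf_indicator (k : β) : Tendsto (fun a => (s a : Set β).indicator (f a) k) 𝓕 (𝓝 0) :=
    squeeze_zero_norm (fun a => norm_indicator_le_norm_self (f a) k)
      (tendsto_zero_iff_norm_tendsto_zero.mp (hf k))
  have hlim := tendsto_tsum_of_dominated_convergence h_sum hf_indicator
    (h_bound.mono fun a ha k => (norm_indicator_le_norm_self _ k).trans (ha k))
  rw [tsum_zero] at hlim
  exact hlim.congr fun a => (sum_eq_tsum_indicator _ _).symm

theorem Complex.norm_exp_I_mul_ofReal_sub_one_sq_le_four (x : ℝ) :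
    ‖Complex.exp (Complex.I * x) - 1‖ ^ 2 ≤ 4 := by
  rw [Complex.norm_exp_I_mul_ofReal_sub_one, norm_mul, Real.norm_two, Real.norm_eq_abs, mul_pow,
    sq_abs]
  nlinarith [Real.sin_sq_le_one (x / 2)]

noncomputable def paraxialPhaseError (ζ ε x : ℝ) : ℝ :=
  (2 * Real.pi * ζ / ε ^ 2) * (1 - Real.sqrt (1 - (x * ε) ^ 2)) - Real.pi * ζ * x ^ 2

/-- Rationalising `1 - √(1 - (xε)²)` cancels the `1 / ε²` singularity. -/
theorem paraxialPhaseError_eq {ζ ε x : ℝ} (hε : ε ≠ 0) (hxε : (x * ε) ^ 2 ≤ 1) :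
    paraxialPhaseError ζ ε x =
      2 * Real.pi * ζ * x ^ 2 / (1 + Real.sqrt (1 - (x * ε) ^ 2)) - Real.pi * ζ * x ^ 2 := by
  have hsq : Real.sqrt (1 - (x * ε) ^ 2) ^ 2 = 1 - (x * ε) ^ 2 := Real.sq_sqrt (by linarith)
  have hpos : 0 < 1 + Real.sqrt (1 - (x * ε) ^ 2) := by positivity
  have hgap : 1 - Real.sqrt (1 - (x * ε) ^ 2) =
      (x * ε) ^ 2 / (1 + Real.sqrt (1 - (x * ε) ^ 2)) := by
    rw [eq_div_iff hpos.ne']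
    linear_combination -hsq
  rw [paraxialPhaseError, hgap]
  field_simp

theorem tendsto_paraxialPhaseError (ζ x : ℝ) :
    Tendsto (paraxialPhaseError ζ · x) (𝓝[≠] 0) (𝓝 0) := by
  have hsmall : ∀ᶠ ε in 𝓝[≠] (0 : ℝ), ε ≠ 0 ∧ (x * ε) ^ 2 ≤ 1 := by
    refine eventually_mem_nhdsWithin.and (nhdsWithin_le_nhds ?_)
    have hsq : Tendsto (fun ε : ℝ => (x * ε) ^ 2) (𝓝 0) (𝓝 0) :=
      ((continuous_const.mul continuous_id).pow 2).tendsto' 0 0 (by simp)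
    exact hsq.eventually_le_const zero_lt_one
  have hcont : ContinuousAt
      (fun ε : ℝ => 2 * Real.pi * ζ * x ^ 2 / (1 + Real.sqrt (1 - (x * ε) ^ 2)) -
        Real.pi * ζ * x ^ 2) 0 := by
    refine ContinuousAt.sub (continuousAt_const.div (by fun_prop) ?_) continuousAt_const
    positivity
  have h0 : 2 * Real.pi * ζ * x ^ 2 / (1 + Real.sqrt (1 - (x * 0) ^ 2)) -
      Real.pi * ζ * x ^ 2 = 0 := by norm_num; ring
  refine (h0 ▸ hcont.tendsto.mono_left nhdsWithin_le_nhds).congr' ?_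
  filter_upwards [hsmall] with ε hε using (paraxialPhaseError_eq hε.1 hε.2).symm

theorem paraxial_phase_error_sum_limit (g : ℤ → ℂ)
    (hg : Summable fun n : ℤ => ‖g n‖ ^ 2) (ζ : ℝ) :
    Tendsto
      (fun ε : ℝ => ∑ n ∈ Finset.Icc (-⌊1 / ε⌋) ⌊1 / ε⌋,
        ‖g n‖ ^ 2 *
          ‖Complex.exp (Complex.I *
              ((2 * Real.pi * ζ / ε ^ 2) * (1 - Real.sqrt (1 - ((n : ℝ) * ε) ^ 2)) -
                Real.pi * ζ * (n : ℝ) ^ 2 : ℝ)) - 1‖ ^ 2)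
      (nhdsWithin 0 (Set.Ioi 0)) (nhds 0) := by
  refine tendsto_finset_sum_zero_of_dominated (bound := fun n => 4 * ‖g n‖ ^ 2) _
    (hg.mul_left 4) (fun n => ?_) (Eventually.of_forall fun ε n => ?_)
  · have hθ := (tendsto_paraxialPhaseError ζ n).mono_left
      (nhdsWithin_mono _ fun ε (hε : 0 < ε) => hε.ne')
    have hcont : Continuous fun r : ℝ => ‖g n‖ ^ 2 * ‖Complex.exp (Complex.I * r) - 1‖ ^ 2 := by
      fun_prop
    have h0 : ‖g n‖ ^ 2 * ‖Complex.exp (Complex.I * (0 : ℝ)) - 1‖ ^ 2 = 0 := by simp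
    have hlim := (hcont.tendsto 0).comp hθ
    rwa [h0] at hlim
  · rw [norm_mul, norm_pow, norm_pow, norm_norm, norm_norm, mul_comm]
    exact mul_le_mul_of_nonneg_right (Complex.norm_exp_I_mul_ofReal_sub_one_sq_le_four _)
      (sq_nonneg _)
end

section
/- Let ν and p be integers, q a positive integer, and set ζ₀ := ν + p/q. Then the function n ↦ exp(iπζ₀ n²) · exp(−iπ(ν+p) n) from ℤ to ℂ is periodic with period q. -/
open Complex

/-- Over a period the phase picks up the factor `exp (π i ((2 n + q) ζ q - c q))`,
which is `exp (π i (2 n k + (k - c) q)) = 1`. -/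
theorem periodic_exp_quadratic_phase {ζ : ℂ} {c q k : ℤ} (hk : ζ * q = k)
    (heven : Even ((k - c) * q)) :
    Function.Periodic
      (fun n : ℤ => exp (Real.pi * I * ζ * (n : ℂ) ^ 2) * exp (-(Real.pi * I * (c : ℂ) * n))) q := by
  intro n
  dsimp only
  obtain ⟨m, hm⟩ := heven
  have hm' : ((k : ℂ) - c) * q = m + m := by exact_mod_cast hm
  rw [← exp_add, ← exp_add, exp_eq_exp_iff_exists_int]
  refine ⟨n * k + m, ?_⟩
  push_cast
  linear_combination Real.pi * I * (2 * n + q) * hk + Real.pi * I * hm'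

theorem talbot_quadratic_phase_periodic (ν p : ℤ) (q : ℕ) (hq : 0 < q)
    (ζ₀ : ℝ) (hζ₀ : ζ₀ = (ν : ℝ) + (p : ℝ) / (q : ℝ)) (n : ℤ) :
    Complex.exp (Real.pi * Complex.I * (ζ₀ : ℂ) * ((n + (q : ℤ) : ℤ) : ℂ) ^ 2) *
        Complex.exp (-(Real.pi * Complex.I * ((ν + p : ℤ) : ℂ) * ((n + (q : ℤ) : ℤ) : ℂ))) =
      Complex.exp (Real.pi * Complex.I * (ζ₀ : ℂ) * (n : ℂ) ^ 2) *
        Complex.exp (-(Real.pi * Complex.I * ((ν + p : ℤ) : ℂ) * (n : ℂ))) := by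
  have hq₀ : (q : ℂ) ≠ 0 := by exact_mod_cast hq.ne'
  refine periodic_exp_quadratic_phase (k := ν * q + p) ?_ ?_ n
  · subst hζ₀
    push_cast
    field_simp
  · have hparity : (ν * q + p - (ν + p)) * q = ν * (q * (q - 1)) := by ring
    rw [hparity]
    exact (Int.even_mul_pred_self q).mul_left ν
end

section
/- Let (g_n)_{n∈ℤ} be an absolutely summable sequence of complex numbers, let ν, p be integers, q a positive integer, and set ζ₀ := ν + p/q. Define c_r := (1/q) · Σ_{m=0}^{q−1} exp(iπζ₀ m² − iπ(ν+p) m − 2πi r m / q) for r = 0, …, q−1. Then for every real ξ: Σ_{n∈ℤ} g_n exp(2πi n ξ + iπζ₀ n²) = Σ_{r=0}^{q−1} c_r · Σ_{n∈ℤ} g_n exp(2πi n (ξ + r/q + (ν+p)/2)). -/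
/-!
The chirp `m ↦ exp (iπζ₀m² - iπ(ν+p)m)` is `q`-periodic on `ℤ`, because `ζ₀q ∈ ℤ` and
`q(q-1)` is even. It is therefore equal to its discrete Fourier series
`∑ r, c r * exp (2πirm/q)`, whose coefficients are exactly the Gauss sums `c r`. Multiplying
back by `exp (iπ(ν+p)n)` turns each Fourier mode into a transverse shift by `r/q + (ν+p)/2`,
and since `g` is absolutely summable the finite sum over `r` commutes with the series over `n`.
-/

open Complex Finset
open scoped Real

theorem sum_range_exp_two_pi_I_mul_div_eq_ite {q : ℕ} (hq : q ≠ 0) (d : ℤ) :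
    ∑ r ∈ range q, exp (2 * π * I * r * d / q) = if (q : ℤ) ∣ d then (q : ℂ) else 0 := by
  have hζ := Complex.isPrimitiveRoot_exp q hq
  set x := exp (2 * π * I / q) ^ d with hx
  have hterm (r : ℕ) : exp (2 * π * I * r * d / q) = x ^ r := by
    rw [hx, ← Complex.exp_int_mul, ← Complex.exp_nat_mul]
    ring_nf
  simp only [hterm]
  split_ifs with hdvd
  · simp [hx, (hζ.zpow_eq_one_iff_dvd d).mpr hdvd]
  · have hx1 : x ≠ 1 := fun h => hdvd ((hζ.zpow_eq_one_iff_dvd d).mp h)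
    have hxq : x ^ q = 1 := by
      rw [hx, ← zpow_natCast, ← zpow_mul, mul_comm d, zpow_mul, zpow_natCast, hζ.pow_eq_one,
        one_zpow]
    rw [geom_sum_eq hx1, hxq, sub_self, zero_div]

theorem Function.Periodic.eq_sum_range_dft {F : ℤ → ℂ} {q : ℕ} (hq : q ≠ 0)
    (hF : Function.Periodic F q) (n : ℤ) :
    F n = ∑ r ∈ range q,
      ((1 / q : ℂ) * ∑ m ∈ range q, F m / exp (2 * π * I * r * m / q)) *
        exp (2 * π * I * r * n / q) := by
  set k := (n % q).toNat
  have hk : (k : ℤ) = n % q := Int.toNat_of_nonneg (Int.emod_nonneg n (by exact_mod_cast hq))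
  have hdvd_iff (m : ℕ) (hm : m ∈ range q) : (q : ℤ) ∣ n - m ↔ m = k := by
    rw [← Int.modEq_iff_dvd, Int.ModEq,
      Int.emod_eq_of_lt (by positivity) (by exact_mod_cast mem_range.mp hm)]
    omega
  have hk_mem : k ∈ range q := mem_range.mpr (by
    have := Int.emod_lt_of_pos n (by exact_mod_cast Nat.pos_of_ne_zero hq : (0 : ℤ) < q)
    omega)
  calc F n = F k := by
        rw [hk, Int.emod_def, mul_comm]
        exact (hF.sub_int_mul_eq (n / q)).symm
    _ = (1 / q : ℂ) * ∑ m ∈ range q, if m = k then F m * q else 0 := by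
        rw [sum_ite_eq', if_pos hk_mem]
        field_simp
    _ = (1 / q : ℂ) * ∑ m ∈ range q,
          F m * ∑ r ∈ range q, exp (2 * π * I * r * (n - m : ℤ) / q) := by
        refine congrArg _ (sum_congr rfl fun m hm => ?_)
        rw [sum_range_exp_two_pi_I_mul_div_eq_ite hq, mul_ite, mul_zero]
        exact if_congr (hdvd_iff m hm).symm rfl rfl
    _ = ∑ r ∈ range q,
          ((1 / q : ℂ) * ∑ m ∈ range q, F m / exp (2 * π * I * r * m / q)) *
            exp (2 * π * I * r * n / q) := by
        simp only [mul_sum, sum_mul]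
        rw [sum_comm]
        refine sum_congr rfl fun r _ => sum_congr rfl fun m _ => ?_
        have hsplit : exp (2 * π * I * r * (n - m : ℤ) / q) =
            exp (2 * π * I * r * n / q) / exp (2 * π * I * r * m / q) := by
          rw [← Complex.exp_sub]
          push_cast
          ring_nf
        rw [hsplit]
        ring

theorem periodic_exp_talbot_phase {ν p : ℤ} {q : ℕ} (hq : q ≠ 0) {ζ₀ : ℝ}
    (hζ₀ : ζ₀ = ν + p / q) :
    Function.Periodic
      (fun m : ℤ => exp (π * I * ζ₀ * m ^ 2 - π * I * ((ν + p : ℤ) : ℂ) * m)) q := by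
  intro m
  have hζq : (ζ₀ : ℂ) * q = ν * q + p := by
    rw [hζ₀]
    push_cast
    field_simp
  obtain ⟨t, ht⟩ := Int.even_mul_succ_self ((q : ℤ) - 1)
  have htC : ((q : ℂ) - 1) * (q - 1 + 1) = t + t := by
    exact_mod_cast congrArg (Int.cast : ℤ → ℂ) ht
  have hshift :
      π * I * ζ₀ * ((m + q : ℤ) : ℂ) ^ 2 - π * I * ((ν + p : ℤ) : ℂ) * ((m + q : ℤ) : ℂ) =
        π * I * ζ₀ * m ^ 2 - π * I * ((ν + p : ℤ) : ℂ) * m +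
          (m * (ν * q + p) + ν * t : ℤ) * (2 * π * I) := by
    push_cast
    linear_combination (π * I * (2 * m + q)) * hζq + (π * I * ν) * htC
  simp only
  rw [hshift, Complex.exp_add, Complex.exp_int_mul_two_pi_mul_I, mul_one]

theorem exp_talbot_mode_eq_sum_shifted {ν p : ℤ} {q : ℕ} (hq : q ≠ 0) {ζ₀ : ℝ}
    (hζ₀ : ζ₀ = ν + p / q) {c : ℕ → ℂ}
    (hc : ∀ r : ℕ, c r = (1 / (q : ℂ)) * ∑ m ∈ range q,
      exp (π * I * ζ₀ * (m : ℂ) ^ 2 - π * I * ((ν + p : ℤ) : ℂ) * m - 2 * π * I * r * m / q))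
    (ξ : ℝ) (n : ℤ) :
    exp (2 * π * I * n * ξ + π * I * ζ₀ * (n : ℂ) ^ 2) =
      ∑ r ∈ range q, c r * exp (2 * π * I * n * ((ξ + r / q + (ν + p) / 2 : ℝ) : ℂ)) := by
  set F := fun m : ℤ => exp (π * I * ζ₀ * m ^ 2 - π * I * ((ν + p : ℤ) : ℂ) * m) with hF
  have hcF (r : ℕ) :
      c r = (1 / q : ℂ) * ∑ m ∈ range q, F m / exp (2 * π * I * r * m / q) := by
    simp only [hc, hF, Complex.exp_sub, Int.cast_natCast]
  have hFper : Function.Periodic F q := periodic_exp_talbot_phase hq hζ₀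
  set E := exp (2 * π * I * n * ξ + π * I * ((ν + p : ℤ) : ℂ) * n)
  calc exp (2 * π * I * n * ξ + π * I * ζ₀ * (n : ℂ) ^ 2) = E * F n := by
        rw [← Complex.exp_add]
        ring_nf
    _ = ∑ r ∈ range q, c r * (E * exp (2 * π * I * r * n / q)) := by
        rw [hFper.eq_sum_range_dft hq n, mul_sum]
        exact sum_congr rfl fun r _ => by rw [hcF, mul_left_comm]
    _ = _ := by
        refine sum_congr rfl fun r _ => ?_
        rw [← Complex.exp_add]
        push_cast
        ring_nf

theorem summable_mul_exp_two_pi_I_mul {g : ℤ → ℂ} (hg : Summable fun n : ℤ => ‖g n‖) (s : ℝ) :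
    Summable fun n : ℤ => g n * exp (2 * π * I * n * s) := by
  refine Summable.of_norm_bounded hg fun n => le_of_eq ?_
  rw [norm_mul, show 2 * π * I * n * s = ((2 * π * n * s : ℝ) : ℂ) * I by push_cast; ring,
    Complex.norm_exp_ofReal_mul_I, mul_one]

theorem fractional_talbot_decomposition (g : ℤ → ℂ) (hg : Summable fun n : ℤ => ‖g n‖)
    (ν p : ℤ) (q : ℕ) (hq : 0 < q)
    (ζ₀ : ℝ) (hζ₀ : ζ₀ = (ν : ℝ) + (p : ℝ) / (q : ℝ))
    (c : ℕ → ℂ)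
    (hc : ∀ r : ℕ, c r = (1 / (q : ℂ)) * ∑ m ∈ Finset.range q,
      Complex.exp (Real.pi * Complex.I * (ζ₀ : ℂ) * (m : ℂ) ^ 2 -
        Real.pi * Complex.I * ((ν + p : ℤ) : ℂ) * (m : ℂ) -
        2 * Real.pi * Complex.I * (r : ℂ) * (m : ℂ) / (q : ℂ))) (ξ : ℝ) :
    ∑' n : ℤ, g n * Complex.exp (2 * Real.pi * Complex.I * (n : ℂ) * (ξ : ℂ) +
        Real.pi * Complex.I * (ζ₀ : ℂ) * (n : ℂ) ^ 2) =
      ∑ r ∈ Finset.range q, c r *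
        ∑' n : ℤ, g n * Complex.exp (2 * Real.pi * Complex.I * (n : ℂ) *
          ((ξ + (r : ℝ) / (q : ℝ) + ((ν : ℝ) + (p : ℝ)) / 2 : ℝ) : ℂ)) := by
  calc _ = ∑' n : ℤ, ∑ r ∈ range q, c r * (g n * exp (2 * π * I * n *
          ((ξ + r / q + (ν + p) / 2 : ℝ) : ℂ))) := by
        refine tsum_congr fun n => ?_
        rw [exp_talbot_mode_eq_sum_shifted hq.ne' hζ₀ hc ξ n, mul_sum]
        exact sum_congr rfl fun r _ => mul_left_comm _ _ _
    _ = _ := by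
        rw [Summable.tsum_finsetSum fun r _ =>
          (summable_mul_exp_two_pi_I_mul hg _).mul_left (c r)]
        simp only [tsum_mul_left]
end

section
/- Let p and q be coprime integers with q ≥ 1, and let ν, r be any integers. Then |(1/q) · Σ_{m=0}^{q−1} exp(iπ(ν + p/q) m² − iπ(ν+p) m − 2πi r m / q)| = 1/√q. -/
/-!
Up to the factor `exp (iπν m (m - 1)) = 1`, the `m`-th summand is
`g m = exp (iπ (p m (m - q) - 2 r m) / q)`, which is `q`-periodic and satisfies
`g (m + n) = g m * g n * ψ (m n)` with `ψ k = exp (2πi p k / q)`, a primitive additive character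
of `ZMod q` because `p` is a unit mod `q`. Hence
`|∑ g|² = ∑ₓ conj (g x) ∑ᵧ g (x + y) = ∑ᵧ g y ∑ₓ ψ (x y) = q g 0 = q`.
-/

open Complex Finset

theorem AddChar.IsPrimitive.mulShift_of_isUnit {R R' : Type*} [CommRing R] [CommMonoid R']
    {ψ : AddChar R R'} (hψ : ψ.IsPrimitive) {u : R} (hu : IsUnit u) :
    (ψ.mulShift u).IsPrimitive := fun a ha => by
  rw [AddChar.mulShift_mulShift]
  exact hψ (hu.mul_right_eq_zero.not.mpr ha)

theorem ZMod.sum_val_eq_sum_range {M : Type*} [AddCommMonoid M] (q : ℕ) [NeZero q]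
    (f : ℕ → M) :
    ∑ x : ZMod q, f x.val = ∑ m ∈ range q, f m :=
  Finset.sum_nbij' ZMod.val Nat.cast (fun x _ => mem_range.mpr (ZMod.val_lt x))
    (fun _ _ => mem_univ _) (fun x _ => ZMod.natCast_zmod_val x)
    (fun _ hm => ZMod.val_cast_of_lt (mem_range.mp hm)) (fun _ _ => rfl)

theorem Function.Periodic.map_intCast_val {α : Type*} {f : ℤ → α} {q : ℕ} [NeZero q]
    (hf : Function.Periodic f q) (m : ℤ) : f ((m : ZMod q).val) = f m := by
  rw [ZMod.val_intCast, ← hf.int_mul (m / q) (m % q), Int.cast_id, mul_comm,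
    Int.emod_add_mul_ediv]

theorem sq_norm_sum_eq_card_of_map_add {R : Type*} [CommRing R] [Fintype R]
    {ψ : AddChar R ℂ} (hψ : ψ.IsPrimitive) {g : R → ℂ} (hg : ∀ x, ‖g x‖ = 1)
    (hadd : ∀ x y, g (x + y) = g x * g y * ψ (x * y)) :
    ‖∑ x, g x‖ ^ 2 = Fintype.card R := by
  classical
  have hg0 : g 0 = 1 := by
    have h := hadd 0 0
    simp only [add_zero, mul_zero, AddChar.map_zero_eq_one, mul_one] at h
    exact (mul_eq_left₀ (norm_ne_zero_iff.mp ((hg 0).trans_ne one_ne_zero))).mp h.symm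
  have hshift (x : R) : ∑ y, g (x + y) = ∑ y, g y := Equiv.sum_comp (Equiv.addLeft x) g
  have hconj (x : R) : (starRingEnd ℂ) (g x) * g x = 1 := by simp [Complex.conj_mul', hg]
  apply Complex.ofReal_injective
  calc ((‖∑ x, g x‖ ^ 2 : ℝ) : ℂ)
      = ∑ x, (starRingEnd ℂ) (g x) * ∑ y, g (x + y) := by
        simp only [hshift, ← Finset.sum_mul, ← map_sum, Complex.conj_mul', Complex.ofReal_pow]
    _ = ∑ x, ∑ y, g y * ψ (x * y) := by
        simp only [Finset.mul_sum, hadd, ← mul_assoc, hconj, one_mul]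
    _ = ∑ y, g y * ∑ x, ψ (x * y) := by
        rw [Finset.sum_comm]; simp only [Finset.mul_sum]
    _ = Fintype.card R := by
        simp [AddChar.sum_mulShift _ hψ, hg0]

namespace Talbot

noncomputable def phase (p : ℤ) (q : ℕ) (r m : ℤ) : ℝ :=
  Real.pi * (p * m * (m - q) - 2 * r * m) / q

noncomputable def term (p : ℤ) (q : ℕ) (r m : ℤ) : ℂ :=
  exp (phase p q r m * I)

variable {p : ℤ} {q : ℕ} {r : ℤ}

theorem norm_term (m : ℤ) : ‖term p q r m‖ = 1 := norm_exp_ofReal_mul_I _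

theorem term_periodic (hq : q ≠ 0) : Function.Periodic (term p q r) q := fun m => by
  have hphase : (phase p q r (m + q) * I : ℂ) =
      phase p q r m * I + (p * m - r : ℤ) * (2 * Real.pi * I) := by
    simp only [phase]; push_cast; field_simp; ring
  rw [term, term, hphase, exp_add, exp_int_mul_two_pi_mul_I, mul_one]

theorem term_add (hq : q ≠ 0) (m n : ℤ) :
    term p q r (m + n) =
      term p q r m * term p q r n * exp (2 * Real.pi * I * (p * m * n : ℤ) / q) := by
  have hphase : (phase p q r (m + n) * I : ℂ) =
      phase p q r m * I + phase p q r n * I + 2 * Real.pi * I * (p * m * n : ℤ) / q := by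
    simp only [phase]; push_cast; field_simp; ring
  rw [term, term, term, hphase, exp_add, exp_add]

theorem exp_eq_term (hq : q ≠ 0) (ν : ℤ) (m : ℕ) :
    Complex.exp (Real.pi * Complex.I * ((ν : ℂ) + (p : ℂ) / (q : ℂ)) * (m : ℂ) ^ 2 -
          Real.pi * Complex.I * ((ν + p : ℤ) : ℂ) * (m : ℂ) -
          2 * Real.pi * Complex.I * (r : ℂ) * (m : ℂ) / (q : ℂ)) = term p q r m := by
  obtain ⟨t, ht⟩ := Int.even_mul_pred_self m
  have htC : (m : ℂ) * (m - 1) = t + t := by exact_mod_cast ht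
  have hexp : Real.pi * Complex.I * ((ν : ℂ) + (p : ℂ) / (q : ℂ)) * (m : ℂ) ^ 2 -
          Real.pi * Complex.I * ((ν + p : ℤ) : ℂ) * (m : ℂ) -
          2 * Real.pi * Complex.I * (r : ℂ) * (m : ℂ) / (q : ℂ) =
      phase p q r m * I + (ν * t : ℤ) * (2 * Real.pi * I) := by
    simp only [phase]; push_cast; field_simp; linear_combination (q : ℂ) * ν * htC
  rw [hexp, exp_add, exp_int_mul_two_pi_mul_I, mul_one, term]

noncomputable def termMod (p : ℤ) (q : ℕ) (r : ℤ) (x : ZMod q) : ℂ := term p q r x.val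

theorem norm_termMod (x : ZMod q) : ‖termMod p q r x‖ = 1 := norm_term _

theorem termMod_intCast [NeZero q] (m : ℤ) : termMod p q r m = term p q r m :=
  (term_periodic (NeZero.ne q)).map_intCast_val m

theorem termMod_add [NeZero q] (x y : ZMod q) :
    termMod p q r (x + y) = termMod p q r x * termMod p q r y *
      (ZMod.stdAddChar.mulShift (p : ZMod q)) (x * y) := by
  obtain ⟨m, rfl⟩ := ZMod.intCast_surjective x
  obtain ⟨n, rfl⟩ := ZMod.intCast_surjective y
  rw [AddChar.mulShift_apply, ← Int.cast_add, ← Int.cast_mul, ← Int.cast_mul, termMod_intCast,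
    termMod_intCast, termMod_intCast, ZMod.stdAddChar_coe, term_add (NeZero.ne q), mul_assoc p]

theorem norm_sum_termMod [NeZero q] (hpq : Int.gcd p q = 1) :
    ‖∑ x : ZMod q, termMod p q r x‖ = Real.sqrt q := by
  have hp : IsUnit (p : ZMod q) :=
    (ZMod.coe_int_isUnit_iff_isCoprime p q).mpr (Int.isCoprime_iff_gcd_eq_one.mpr hpq).symm
  have hψ : (ZMod.stdAddChar.mulShift (p : ZMod q)).IsPrimitive :=
    (ZMod.isPrimitive_stdAddChar q).mulShift_of_isUnit hp
  rw [← Real.sqrt_sq (norm_nonneg _),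
    sq_norm_sum_eq_card_of_map_add hψ (norm_termMod (p := p) (r := r)) termMod_add, ZMod.card]

end Talbot

theorem talbot_coefficient_modulus (p : ℤ) (q : ℕ) (hq : 1 ≤ q)
    (hpq : Int.gcd p (q : ℤ) = 1) (ν r : ℤ) :
    ‖(1 / (q : ℂ)) * ∑ m ∈ Finset.range q,
        Complex.exp (Real.pi * Complex.I * ((ν : ℂ) + (p : ℂ) / (q : ℂ)) * (m : ℂ) ^ 2 -
          Real.pi * Complex.I * ((ν + p : ℤ) : ℂ) * (m : ℂ) -
          2 * Real.pi * Complex.I * (r : ℂ) * (m : ℂ) / (q : ℂ))‖ =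
      1 / Real.sqrt q := by
  have : NeZero q := ⟨by omega⟩
  have hsum :
      ∑ m ∈ Finset.range q, Talbot.term p q r m = ∑ x : ZMod q, Talbot.termMod p q r x :=
    (ZMod.sum_val_eq_sum_range q _).symm
  rw [Finset.sum_congr rfl fun m _ => Talbot.exp_eq_term (NeZero.ne q) ν m, hsum, norm_mul,
    Talbot.norm_sum_termMod hpq, norm_div, norm_one, Complex.norm_natCast, ← Real.sqrt_div_self']
  ring
end

section
/- Let p and m be integers and q a positive integer with gcd(p,q) = 1. Then |Σ_{r=0}^{q−1} exp(iπ((pq + 2m) r − p r²)/q)| = √q. -/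
/-!
The phase `ψ n = exp (π i ((p q + 2 m) n - p n²) / q)` satisfies
`ψ (n + q) = ψ n · exp (2 π i (m - p n))`: the linear term `p q n` cancels the `p q²` coming
from the square, so `ψ` is `q`-periodic and descends to `ZMod q`. There
`ψ (s + t) · conj (ψ s) = ψ t · e (-p s t / q)`, so when `|∑ ψ|²` is expanded and summed over `s`
first, orthogonality of the characters of `ZMod q` leaves only `t = 0` (as `p` is a unit mod `q`),
and `|∑ ψ|² = q · ψ 0 = q`.
-/

open Complex Finset ComplexConjugate
open scoped Real

theorem AddChar.IsPrimitive.norm_sum_sq_eq_card {R : Type*} [CommRing R] [Fintype R]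
    {ψ : AddChar R ℂ} (hψ : ψ.IsPrimitive) {f : R → ℂ} {a : R} (ha : IsUnit a) (hf₀ : f 0 = 1)
    (hf : ∀ x y, f (x + y) * conj (f x) = f y * ψ (x * (a * y))) :
    ‖∑ x, f x‖ ^ 2 = Fintype.card R := by
  classical
  have hcorr : (∑ x, f x) * conj (∑ x, f x) = Fintype.card R :=
    calc (∑ y, f y) * conj (∑ x, f x) = ∑ x, (∑ y, f (x + y)) * conj (f x) := by
          rw [map_sum, mul_sum]
          refine sum_congr rfl fun x _ ↦ ?_
          rw [Fintype.sum_equiv (Equiv.addLeft x) (fun y ↦ f (x + y)) f fun _ ↦ rfl]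
      _ = ∑ y, f y * ∑ x, ψ (x * (a * y)) := by
          simp_rw [sum_mul, hf, mul_sum]
          exact sum_comm
      _ = Fintype.card R := by
          simp [AddChar.sum_mulShift _ hψ, ha.mul_right_eq_zero, hf₀]
  exact_mod_cast (Complex.mul_conj' _).symm.trans hcorr

theorem Function.Periodic.map_val_intCast {α : Type*} {φ : ℤ → α} {q : ℕ} [NeZero q]
    (h : Function.Periodic φ q) (n : ℤ) : φ (n : ZMod q).val = φ n := by
  rw [ZMod.val_intCast, Int.emod_def, mul_comm]
  exact h.sub_int_mul_eq (n / q)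

theorem Finset.sum_range_eq_sum_zmod_val {M : Type*} [AddCommMonoid M] (q : ℕ) [NeZero q]
    (g : ℕ → M) : ∑ r ∈ range q, g r = ∑ x : ZMod q, g x.val := by
  obtain ⟨n, rfl⟩ := Nat.exists_eq_succ_of_ne_zero (NeZero.ne q)
  exact (Fin.sum_univ_eq_sum_range g _).symm

noncomputable def halfGaussPhase (p m : ℤ) (q : ℕ) (n : ℤ) : ℂ :=
  exp (π * I * ((p * q + 2 * m) * n - p * n ^ 2) / q)

section halfGaussPhase

variable (p m : ℤ) (q : ℕ)

theorem halfGaussPhase_periodic : Function.Periodic (halfGaussPhase p m q) q := by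
  intro n
  rcases eq_or_ne q 0 with rfl | hq
  · simp
  have hexp : π * I * ((p * q + 2 * m) * ↑(n + q : ℤ) - p * ↑(n + q : ℤ) ^ 2) / q =
      π * I * ((p * q + 2 * m) * n - p * n ^ 2) / q + (m - p * n : ℤ) * (2 * π * I) := by
    push_cast
    field_simp
    ring
  rw [halfGaussPhase, halfGaussPhase, hexp, exp_add, exp_int_mul_two_pi_mul_I, mul_one]

theorem halfGaussPhase_add_mul_conj (s t : ℤ) :
    halfGaussPhase p m q (s + t) * conj (halfGaussPhase p m q s) =
      halfGaussPhase p m q t * exp (2 * π * I * (s * (-p * t) : ℤ) / q) := by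
  simp only [halfGaussPhase, ← exp_conj, ← exp_add, map_div₀, map_mul, map_sub, map_add, map_pow,
    conj_I, conj_ofReal, map_intCast, map_natCast, map_ofNat]
  congr 1
  push_cast
  ring

theorem norm_sum_halfGaussPhase_sq [NeZero q] (hpq : Int.gcd p q = 1) :
    ‖∑ r ∈ range q, halfGaussPhase p m q r‖ ^ 2 = q := by
  have hp : IsUnit (-(p : ZMod q)) := by
    refine ((ZMod.coe_int_isUnit_iff_isCoprime p q).2 ?_).neg
    rwa [Int.isCoprime_iff_gcd_eq_one, Int.gcd_comm]
  have hf (x y : ZMod q) : halfGaussPhase p m q (x + y).val * conj (halfGaussPhase p m q x.val) =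
      halfGaussPhase p m q y.val * ZMod.stdAddChar (x * (-(p : ZMod q) * y)) := by
    obtain ⟨s, rfl⟩ := ZMod.intCast_surjective x
    obtain ⟨t, rfl⟩ := ZMod.intCast_surjective y
    simp only [← Int.cast_add, ← Int.cast_neg, ← Int.cast_mul, ZMod.stdAddChar_coe,
      (halfGaussPhase_periodic p m q).map_val_intCast]
    exact halfGaussPhase_add_mul_conj p m q s t
  rw [sum_range_eq_sum_zmod_val q]
  simpa using (ZMod.isPrimitive_stdAddChar q).norm_sum_sq_eq_card
    (f := fun x ↦ halfGaussPhase p m q x.val) hp (by simp [halfGaussPhase]) hf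

end halfGaussPhase

theorem half_integer_gauss_sum_modulus (p m : ℤ) (q : ℕ) (hq : 0 < q)
    (hpq : Int.gcd p (q : ℤ) = 1) :
    ‖(∑ r ∈ Finset.range q,
        Complex.exp (Real.pi * Complex.I *
          (((p : ℂ) * (q : ℂ) + 2 * (m : ℂ)) * (r : ℂ) - (p : ℂ) * (r : ℂ) ^ 2) / (q : ℂ)))‖ =
      Real.sqrt q := by
  have : NeZero q := ⟨hq.ne'⟩
  rw [← norm_sum_halfGaussPhase_sq p m q hpq, Real.sqrt_sq (norm_nonneg _)]
  simp [halfGaussPhase]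
end

section
/- For integers p, r and a positive integer q with gcd(p,q) = 1, the generalized quadratic Gauss sum 𝔾(p,r,q) := Σ_{n=0}^{q−1} exp(2πi(p n² + r n)/q) satisfies: |𝔾(p,r,q)| = √q if q is odd; |𝔾(p,r,q)| = √(2q) if q is even and q ≡ 2r (mod 4); and |𝔾(p,r,q)| = 0 if q is even and q ≢ 2r (mod 4). -/
/-!
Write the sum as `G = ∑ x : ZMod q, ψ (P x)` with `P x = p x² + r x` and `ψ` the standard
additive character. Then `|G|² = ∑_{x,y} ψ (P x - P y)`, and substituting `x = y + h` gives
`P (y + h) - P y = P h + 2 p h y`, so orthogonality of characters collapses the sum over `y` to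
`q · [2 p h = 0]`. Hence `|G|² = q ∑_{2h = 0} ψ (P h)`. For `q` odd only `h = 0` survives; for
`q = 2s` the two terms `h = 0, s` give `1 + (-1)^(p s + r)`, and with `p` odd this is `2` or `0`
according as `q ≡ 2r (mod 4)`.
-/

open Finset

namespace AddChar

variable {R : Type*} [CommRing R] [Fintype R] [DecidableEq R] {ψ : AddChar R ℂ}

theorem sum_quadratic_mul_conj (hψ : ψ.IsPrimitive) (a b : R) :
    (∑ x, ψ (a * x ^ 2 + b * x)) * starRingEnd ℂ (∑ x, ψ (a * x ^ 2 + b * x)) =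
      Fintype.card R * ∑ h with 2 * a * h = 0, ψ (a * h ^ 2 + b * h) := by
  set P : R → R := fun x ↦ a * x ^ 2 + b * x
  calc (∑ x, ψ (P x)) * starRingEnd ℂ (∑ y, ψ (P y))
      = ∑ y, ∑ x, ψ (P x - P y) := by
        simp only [map_sum, ← map_neg_eq_conj, sum_mul_sum, ← map_add_eq_mul,
          ← sub_eq_add_neg]
        exact sum_comm
    _ = ∑ y, ∑ h, ψ (P h + y * (2 * a * h)) := by
        refine sum_congr rfl fun y _ ↦ Fintype.sum_equiv (Equiv.addLeft (-y)) _ _ fun x ↦ ?_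
        simp only [P, Equiv.coe_addLeft]
        ring_nf
    _ = ∑ h, ψ (P h) * ∑ y, ψ (y * (2 * a * h)) := by
        rw [sum_comm]
        simp only [map_add_eq_mul, mul_sum]
    _ = Fintype.card R * ∑ h with 2 * a * h = 0, ψ (P h) := by
        simp only [sum_mulShift _ hψ, sum_filter, mul_sum]
        exact sum_congr rfl fun h _ ↦ by split_ifs <;> simp [mul_comm]

end AddChar

lemma Int.even_mul_add_iff_two_mul_modEq_four {p : ℤ} (hp : Odd p) (s r : ℤ) :
    Even (p * s + r) ↔ 2 * s ≡ 2 * r [ZMOD 4] := by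
  obtain ⟨t, rfl⟩ := hp
  rw [show (2 * t + 1) * s + r = 2 * (t * s) + s + r by ring, Int.even_iff, Int.ModEq]
  omega

namespace ZMod

lemma sum_range_natCast {q : ℕ} [NeZero q] {M : Type*} [AddCommMonoid M] (f : ZMod q → M) :
    ∑ n ∈ range q, f n = ∑ x, f x :=
  sum_nbij' (↑) val (fun _ _ ↦ mem_univ _) (fun x _ ↦ mem_range.2 x.val_lt)
    (fun _ hn ↦ val_cast_of_lt (mem_range.1 hn)) (fun x _ ↦ natCast_zmod_val x) fun _ _ ↦ rfl

lemma sum_range_exp_quadratic {q : ℕ} [NeZero q] (a b : ℤ) :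
    ∑ n ∈ range q, Complex.exp (2 * Real.pi * Complex.I * (a * (n : ℂ) ^ 2 + b * n) / q) =
      ∑ x : ZMod q, stdAddChar ((a : ZMod q) * x ^ 2 + (b : ZMod q) * x) := by
  rw [← sum_range_natCast]
  refine sum_congr rfl fun n _ ↦ ?_
  have := stdAddChar_coe (N := q) (a * n ^ 2 + b * n)
  push_cast at this
  rw [this]

lemma two_mul_eq_zero_iff_of_odd {q : ℕ} (hq : Odd q) {h : ZMod q} : 2 * h = 0 ↔ h = 0 := by
  have : IsUnit (2 : ZMod q) := by
    simpa using (isUnit_iff_coprime 2 q).2 (Nat.coprime_two_left.2 hq)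
  exact this.mul_right_eq_zero

lemma two_mul_eq_zero_iff_of_eq_add_self {q s : ℕ} [NeZero q] (hqs : q = s + s) {h : ZMod q} :
    2 * h = 0 ↔ h = 0 ∨ h = s := by
  have hs : s < q := by have := NeZero.ne q; omega
  calc 2 * h = 0 ↔ s ∣ h.val := by
        rw [← natCast_zmod_val h, ← Nat.cast_ofNat, ← Nat.cast_mul, natCast_eq_zero_iff,
          val_natCast_of_lt h.val_lt]
        simp only [hqs, ← two_mul, Nat.mul_dvd_mul_iff_left two_pos]
    _ ↔ h.val = 0 ∨ h.val = s := by
        refine ⟨fun ⟨k, hk⟩ ↦ ?_, by rintro (hv | hv) <;> simp [hv]⟩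
        have : k < 2 := Nat.lt_of_mul_lt_mul_left (a := s) (by rw [← hk]; have := h.val_lt; omega)
        interval_cases k <;> simp [hk]
    _ ↔ h = 0 ∨ h = s := by
        rw [val_eq_zero]
        nth_rw 1 [← val_natCast_of_lt hs]
        rw [(val_injective q).eq_iff]

lemma stdAddChar_natCast_half {q s : ℕ} [NeZero q] (hqs : q = s + s) :
    stdAddChar (s : ZMod q) = -1 := by
  have hs : (s : ℂ) ≠ 0 := by have := NeZero.ne q; norm_cast; omega
  have := stdAddChar_coe (N := q) s
  push_cast [hqs] at this
  rw [this, ← Complex.exp_pi_mul_I]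
  congr 1
  field_simp
  ring

lemma normSq_sum_range_exp_quadratic {q : ℕ} [NeZero q] {p : ℤ} (hp : IsUnit (p : ZMod q))
    (r : ℤ) :
    (Complex.normSq (∑ n ∈ range q,
        Complex.exp (2 * Real.pi * Complex.I * (p * (n : ℂ) ^ 2 + r * n) / q)) : ℂ) =
      q * ∑ h : ZMod q with 2 * h = 0, stdAddChar ((p : ZMod q) * h ^ 2 + (r : ZMod q) * h) := by
  rw [sum_range_exp_quadratic, ← Complex.mul_conj,
    AddChar.sum_quadratic_mul_conj (isPrimitive_stdAddChar q), card]
  congr 2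
  refine filter_congr fun h _ ↦ ?_
  rw [mul_right_comm, mul_comm, hp.mul_right_eq_zero]

lemma sum_filter_two_mul_eq_zero_of_odd {q : ℕ} [NeZero q] (hq : Odd q)
    (ψ : AddChar (ZMod q) ℂ) (a b : ZMod q) :
    ∑ h : ZMod q with 2 * h = 0, ψ (a * h ^ 2 + b * h) = 1 := by
  simp [two_mul_eq_zero_iff_of_odd hq, filter_eq']

lemma sum_filter_two_mul_eq_zero_of_eq_add_self {q s : ℕ} [NeZero q] (hqs : q = s + s) {p : ℤ}
    (hp : Odd p) (r : ℤ) :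
    ∑ h : ZMod q with 2 * h = 0, stdAddChar ((p : ZMod q) * h ^ 2 + (r : ZMod q) * h) =
      if (q : ℤ) ≡ 2 * r [ZMOD 4] then 2 else 0 := by
  have hsq : s < q := by have := NeZero.ne q; omega
  have hs0 : (0 : ZMod q) ≠ s := fun h ↦ by
    have := congrArg val h
    rw [val_zero, val_natCast_of_lt hsq] at this
    omega
  have hfilter : ({h | 2 * h = 0} : Finset (ZMod q)) = {0, (s : ZMod q)} := by
    ext h
    simp [two_mul_eq_zero_iff_of_eq_add_self hqs]
  have hψs : stdAddChar ((p : ZMod q) * (s : ZMod q) ^ 2 + (r : ZMod q) * (s : ZMod q)) =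
      (-1) ^ (p * s + r) := by
    rw [show (p : ZMod q) * (s : ZMod q) ^ 2 + r * (s : ZMod q) =
          (p * s + r : ℤ) • (s : ZMod q) by
        simp only [zsmul_eq_mul, Int.cast_add, Int.cast_mul, Int.cast_natCast]; ring,
      AddChar.map_zsmul_eq_zpow, stdAddChar_natCast_half hqs]
  have hq2 : (q : ℤ) = 2 * s := by rw [hqs]; push_cast; ring
  have hparity := Int.even_mul_add_iff_two_mul_modEq_four hp s r
  rw [hfilter, sum_pair hs0, hψs, hq2]
  split_ifs with h
  · rw [Even.neg_one_zpow (hparity.2 h)]; norm_num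
  · rw [Odd.neg_one_zpow (Int.not_even_iff_odd.1 (mt hparity.1 h))]; norm_num

end ZMod

theorem generalized_quadratic_gauss_sum_modulus (p r : ℤ) (q : ℕ) (hq : 0 < q)
    (hpq : Int.gcd p (q : ℤ) = 1) :
    (Odd q →
      ‖∑ n ∈ Finset.range q,
          Complex.exp (2 * Real.pi * Complex.I * ((p : ℂ) * (n : ℂ) ^ 2 + (r : ℂ) * (n : ℂ)) / (q : ℂ))‖ =
        Real.sqrt q) ∧
    (Even q → (q : ℤ) ≡ 2 * r [ZMOD 4] →
      ‖∑ n ∈ Finset.range q,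
          Complex.exp (2 * Real.pi * Complex.I * ((p : ℂ) * (n : ℂ) ^ 2 + (r : ℂ) * (n : ℂ)) / (q : ℂ))‖ =
        Real.sqrt (2 * q)) ∧
    (Even q → ¬ (q : ℤ) ≡ 2 * r [ZMOD 4] →
      ‖∑ n ∈ Finset.range q,
          Complex.exp (2 * Real.pi * Complex.I * ((p : ℂ) * (n : ℂ) ^ 2 + (r : ℂ) * (n : ℂ)) / (q : ℂ))‖ =
        0) := by
  have : NeZero q := ⟨hq.ne'⟩
  have hcop : IsCoprime p q := Int.isCoprime_iff_gcd_eq_one.2 hpq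
  have key := ZMod.normSq_sum_range_exp_quadratic
    ((ZMod.coe_int_isUnit_iff_isCoprime p q).2 hcop.symm) r
  have two_torsion_sum_of_even {s : ℕ} (hqs : q = s + s) :=
    ZMod.sum_filter_two_mul_eq_zero_of_eq_add_self hqs (r := r) <| Int.isCoprime_two_right.1 <|
      IsCoprime.of_mul_right_left (z := (s : ℤ)) (by rwa [hqs, Nat.cast_add, ← two_mul] at hcop)
  refine ⟨fun hodd ↦ ?_, fun ⟨s, hqs⟩ hr ↦ ?_, fun ⟨s, hqs⟩ hr ↦ ?_⟩
  · rw [ZMod.sum_filter_two_mul_eq_zero_of_odd hodd, mul_one] at key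
    rw [Complex.norm_def, Complex.ofReal_injective (key.trans (Complex.ofReal_natCast q).symm)]
  · rw [two_torsion_sum_of_even hqs, if_pos hr] at key
    have hnormSq : Complex.normSq _ = 2 * q :=
      Complex.ofReal_injective (key.trans (by push_cast; ring))
    rw [Complex.norm_def, hnormSq]
  · rw [two_torsion_sum_of_even hqs, if_neg hr, mul_zero] at key
    simpa using key
end

section
/- Let p, r be integers and q an even positive integer with gcd(p,q) = 1. Then the generalized quadratic Gauss sum 𝔾(p,r,q) := Σ_{n=0}^{q−1} exp(2πi(p n² + r n)/q) satisfies |𝔾(p,r,q)|² = q · (1 + (−1)^{pq/2 + r}). -/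
/-!
The sum is `S = ∑_x ψ(f x)` over `ZMod q`, with `ψ` the standard additive character.
Weyl differencing gives `|S|² = ∑_h ∑_y ψ(f(y + h) - f(y))`, and for `f x = p x² + r x` the inner sum is
`ψ(f h) ∑_y ψ(2 p h y)`, which is `q ψ(f h)` if `2 p h = 0` and vanishes otherwise. With `q = 2t` and
`p` a unit mod `q`, the solutions of `2 p h = 0` are `h = 0` and `h = t`, and
`ψ(f t) = exp(π i (p t + r)) = (-1)^(p t + r)`.
-/

open Finset Complex

theorem ZMod.sum_range_natCast_s13 {M : Type*} [AddCommMonoid M] (N : ℕ) [NeZero N]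
    (f : ZMod N → M) : ∑ n ∈ range N, f n = ∑ x, f x :=
  sum_nbij' (↑) ZMod.val (by simp) (by simp [ZMod.val_lt])
    (fun _ hn ↦ ZMod.val_cast_of_lt (mem_range.1 hn)) (fun x _ ↦ ZMod.natCast_zmod_val x)
    (fun _ _ ↦ rfl)

theorem ZMod.sum_range_exp_quadratic_s13 (N : ℕ) [NeZero N] (a b : ℤ) :
    ∑ n ∈ range N, exp (2 * Real.pi * I * (a * (n : ℂ) ^ 2 + b * n) / N) =
      ∑ x : ZMod N, stdAddChar ((a : ZMod N) * x ^ 2 + (b : ZMod N) * x) := by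
  rw [← ZMod.sum_range_natCast_s13]
  refine sum_congr rfl fun n _ ↦ ?_
  have := ZMod.stdAddChar_coe (N := N) (a * n ^ 2 + b * n)
  push_cast at this
  exact this.symm

theorem ZMod.filter_two_mul_eq_zero (t : ℕ) [NeZero t] :
    ({x : ZMod (2 * t) | 2 * x = 0} : Finset _) = {0, (t : ZMod (2 * t))} := by
  ext x
  simp only [mem_filter, mem_univ, true_and, mem_insert, mem_singleton]
  rw [← ZMod.natCast_zmod_val x]
  have hlt := ZMod.val_lt x
  generalize x.val = v at hlt ⊢
  constructor
  · intro hx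
    obtain ⟨c, hc⟩ : 2 * t ∣ 2 * v := (ZMod.natCast_eq_zero_iff _ _).1 (by exact_mod_cast hx)
    have : c < 2 := by nlinarith
    obtain rfl | rfl : v = 0 ∨ v = t := by interval_cases c <;> omega
    all_goals simp
  · rintro (h | h)
    · simp [h]
    · rw [h]; exact_mod_cast ZMod.natCast_self (2 * t)

theorem ZMod.stdAddChar_intCast_mul_half (j : ℤ) (t : ℕ) [NeZero t] :
    stdAddChar ((j : ZMod (2 * t)) * (t : ZMod (2 * t))) = (-1 : ℂ) ^ j := by
  have ht : (t : ℂ) ≠ 0 := Nat.cast_ne_zero.2 (NeZero.ne t)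
  have : 2 * Real.pi * I * ((j * t : ℤ) : ℂ) / ((2 * t : ℕ) : ℂ) = j * (Real.pi * I) := by
    push_cast; field_simp
  rw [← exp_pi_mul_I, ← exp_int_mul, ← this, ← ZMod.stdAddChar_coe]
  push_cast; rfl

namespace AddChar

variable {G H : Type*} [AddCommGroup G] [Fintype G] [AddCommGroup H] [Finite H]

theorem sq_norm_sum_eq_sum_sum_sub (ψ : AddChar H ℂ) (f : G → H) :
    ((‖∑ x, ψ (f x)‖ ^ 2 : ℝ) : ℂ) = ∑ h, ∑ y, ψ (f (y + h) - f y) := by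
  push_cast
  rw [← mul_conj', map_sum, sum_mul_sum, sum_comm]
  conv_rhs => rw [sum_comm]
  refine sum_congr rfl fun y _ ↦ (Fintype.sum_equiv (Equiv.addLeft y) _ _ fun h ↦ ?_).symm
  simp [← map_neg_eq_conj, ← map_add_eq_mul, sub_eq_add_neg]

theorem sq_norm_sum_quadratic {R : Type*} [CommRing R] [Fintype R] [DecidableEq R]
    {ψ : AddChar R ℂ} (hψ : ψ.IsPrimitive) (a b : R) :
    ((‖∑ x, ψ (a * x ^ 2 + b * x)‖ ^ 2 : ℝ) : ℂ) =
      Fintype.card R * ∑ h with 2 * a * h = 0, ψ (a * h ^ 2 + b * h) := by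
  have hdiff (h y : R) : a * (y + h) ^ 2 + b * (y + h) - (a * y ^ 2 + b * y) =
      (a * h ^ 2 + b * h) + y * (2 * a * h) := by ring
  rw [sq_norm_sum_eq_sum_sum_sub]
  simp only [hdiff, map_add_eq_mul, ← mul_sum, sum_mulShift _ hψ]
  rw [mul_sum, sum_filter]
  exact sum_congr rfl fun h _ ↦ by split_ifs <;> ring

end AddChar

theorem gauss_sum_even_modulus_sq_general (p r : ℤ) (q : ℕ) (hqe : Even q)
    (hpq : Int.gcd p (q : ℤ) = 1) :
    ‖(∑ n ∈ Finset.range q,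
        Complex.exp (2 * Real.pi * Complex.I * ((p : ℂ) * (n : ℂ) ^ 2 + (r : ℂ) * (n : ℂ)) / (q : ℂ)))‖ ^ 2 =
      (q : ℝ) * (1 + (-1 : ℝ) ^ (p * (q : ℤ) / 2 + r)) := by
  obtain ⟨t, rfl⟩ := even_iff_two_dvd.mp hqe
  rcases eq_or_ne t 0 with rfl | ht
  · simp
  have : NeZero t := ⟨ht⟩
  have hp : IsUnit (p : ZMod (2 * t)) :=
    (ZMod.coe_int_isUnit_iff_isCoprime _ _).2 (Int.isCoprime_iff_gcd_eq_one.2 hpq).symm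
  have hker : ({h : ZMod (2 * t) | 2 * p * h = 0} : Finset _) = {0, (t : ZMod (2 * t))} := by
    rw [← ZMod.filter_two_mul_eq_zero]
    simp only [mul_right_comm _ (p : ZMod (2 * t)), hp.mul_left_eq_zero]
  have hexp : p * ((2 * t : ℕ) : ℤ) / 2 + r = p * t + r := by
    push_cast; rw [mul_left_comm, Int.mul_ediv_cancel_left _ two_ne_zero]
  have h0t : (0 : ZMod (2 * t)) ≠ t := by
    rw [ne_comm, Ne, ZMod.natCast_eq_zero_iff]
    exact Nat.not_dvd_of_pos_of_lt (NeZero.pos t) (by omega)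
  have hft : (p : ZMod (2 * t)) * t ^ 2 + r * t = ((p * t + r : ℤ) : ZMod (2 * t)) * t := by
    push_cast; ring
  apply Complex.ofReal_injective
  rw [ZMod.sum_range_exp_quadratic_s13, AddChar.sq_norm_sum_quadratic (ZMod.isPrimitive_stdAddChar _), hker, sum_pair h0t, hft,
    ZMod.stdAddChar_intCast_mul_half, ZMod.card, hexp]
  simp

theorem gauss_sum_even_modulus_sq (p r : ℤ) (q : ℕ) (hq : 0 < q) (hqe : Even q)
    (hpq : Int.gcd p (q : ℤ) = 1) :
    ‖(∑ n ∈ Finset.range q,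
        Complex.exp (2 * Real.pi * Complex.I * ((p : ℂ) * (n : ℂ) ^ 2 + (r : ℂ) * (n : ℂ)) / (q : ℂ)))‖ ^ 2 =
      (q : ℝ) * (1 + (-1 : ℝ) ^ (p * (q : ℤ) / 2 + r)) :=
  gauss_sum_even_modulus_sq_general p r q hqe hpq
end

section
/- Let a > 0, b ∈ ℝ, c ≥ 1, and T > 0. Then the improper integral ∫_T^∞ sin(ax + b) / x^c dx converges, and |∫_T^∞ sin(ax + b)/x^c dx − cos(aT + b)/(a T^c)| ≤ 2c/(a² T^{c+1}). -/
/-!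
Integrating by parts against `x ^ (-c)` trades the oscillation of `sin (a x + b)` for a factor
`1 / a` and one more power of decay: the boundary term at `T` is `cos (a T + b) / (a T ^ c)` and
the remainder is `-(c / a) ∫_T^∞ cos (a x + b) / x ^ (c + 1)`. A second integration by parts
bounds that last integral by twice its boundary term, `2 / (a T ^ (c + 1))`.
-/

open Filter Topology MeasureTheory Set

section RpowMulBounded

variable {S C : ℝ → ℝ} {M T p q : ℝ}

lemma integrableOn_Ioi_rpow_mul_of_abs_le (hq : q < -1) (hT : 0 < T) (hC : Continuous C)
    (hM : ∀ x, |C x| ≤ M) : IntegrableOn (fun x => x ^ q * C x) (Ioi T) :=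
  (integrableOn_Ioi_rpow_of_lt hq hT).mul_bdd hC.aestronglyMeasurable
    (Eventually.of_forall fun x => (Real.norm_eq_abs _).trans_le (hM x))

lemma abs_integral_Ioi_rpow_mul_le (hq : q < -1) (hT : 0 < T)
    (hM : ∀ x, |C x| ≤ M) : |∫ x in Ioi T, x ^ q * C x| ≤ M * (T ^ (q + 1) / -(q + 1)) := by
  have hbound : ∀ᵐ x ∂volume.restrict (Ioi T), ‖x ^ q * C x‖ ≤ M * x ^ q := by
    filter_upwards [ae_restrict_mem measurableSet_Ioi] with x hx
    have hxq : 0 < x ^ q := Real.rpow_pos_of_pos (hT.trans hx) q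
    rw [norm_mul, Real.norm_of_nonneg hxq.le, Real.norm_eq_abs, mul_comm]
    exact mul_le_mul_of_nonneg_right (hM x) hxq.le
  calc |∫ x in Ioi T, x ^ q * C x|
      ≤ ∫ x in Ioi T, M * x ^ q :=
        norm_integral_le_of_norm_le ((integrableOn_Ioi_rpow_of_lt hq hT).const_mul M) hbound
    _ = M * (T ^ (q + 1) / -(q + 1)) := by
        rw [integral_const_mul, integral_Ioi_rpow_of_lt hq hT, neg_div, div_neg]

lemma tendsto_rpow_mul_of_abs_le (hp : p < 0) (hM : ∀ x, |C x| ≤ M) :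
    Tendsto (fun R : ℝ => R ^ p * C R) atTop (𝓝 0) := by
  have hdecay : Tendsto (fun R : ℝ => M * R ^ p) atTop (𝓝 0) := by
    simpa using (tendsto_rpow_neg_atTop (neg_pos.2 hp)).const_mul M
  refine squeeze_zero_norm' ?_ hdecay
  filter_upwards [eventually_gt_atTop 0] with R hR
  have hRp : 0 < R ^ p := Real.rpow_pos_of_pos hR p
  rw [norm_mul, Real.norm_of_nonneg hRp.le, Real.norm_eq_abs, mul_comm]
  exact mul_le_mul_of_nonneg_right (hM R) hRp.le

lemma intervalIntegral_rpow_mul_deriv (hT : 0 < T) {R : ℝ} (hR : T ≤ R)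
    (hd : ∀ x, HasDerivAt C (S x) x) (hS : Continuous S) :
    ∫ x in T..R, x ^ p * S x =
      R ^ p * C R - T ^ p * C T - p * ∫ x in T..R, x ^ (p - 1) * C x := by
  have hC : Continuous C := continuous_iff_continuousAt.2 fun x => (hd x).continuousAt
  have hpos : ∀ x ∈ uIcc T R, 0 < x := fun x hx => hT.trans_le (uIcc_of_le hR ▸ hx).1
  rw [← intervalIntegral.integral_const_mul]
  simp_rw [← mul_assoc]
  refine intervalIntegral.integral_mul_deriv_eq_deriv_mul
    (fun x hx => Real.hasDerivAt_rpow_const (Or.inl (hpos x hx).ne')) (fun x _ => hd x) ?_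
    (hS.intervalIntegrable T R)
  refine ContinuousOn.intervalIntegrable fun x hx => ?_
  exact (continuousAt_const.mul
    (Real.continuousAt_rpow_const x (p - 1) (Or.inl (hpos x hx).ne'))).continuousWithinAt

lemma tendsto_intervalIntegral_rpow_mul_deriv {L : ℝ} (hp : p < 0) (hT : 0 < T)
    (hd : ∀ x, HasDerivAt C (S x) x) (hS : Continuous S) (hM : ∀ x, |C x| ≤ M)
    (hL : Tendsto (fun R => ∫ x in T..R, x ^ (p - 1) * C x) atTop (𝓝 L)) :
    Tendsto (fun R => ∫ x in T..R, x ^ p * S x) atTop (𝓝 (-(T ^ p * C T) - p * L)) := by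
  have hlim := (((tendsto_rpow_mul_of_abs_le hp hM).sub
    (tendsto_const_nhds (x := T ^ p * C T))).sub (hL.const_mul p))
  rw [zero_sub] at hlim
  refine hlim.congr' ?_
  filter_upwards [eventually_ge_atTop T] with R hR
  exact (intervalIntegral_rpow_mul_deriv hT hR hd hS).symm

lemma exists_tendsto_intervalIntegral_rpow_mul_deriv (hp : p < 0) (hT : 0 < T)
    (hd : ∀ x, HasDerivAt C (S x) x) (hS : Continuous S) (hM : ∀ x, |C x| ≤ M) :
    ∃ L, Tendsto (fun R => ∫ x in T..R, x ^ p * S x) atTop (𝓝 L) ∧ |L| ≤ 2 * M * T ^ p := by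
  have hC : Continuous C := continuous_iff_continuousAt.2 fun x => (hd x).continuousAt
  have hq : p - 1 < -1 := by linarith
  set I := ∫ x in Ioi T, x ^ (p - 1) * C x
  have hI : |I| ≤ M * (T ^ p / -p) := by
    simpa using abs_integral_Ioi_rpow_mul_le hq hT hM
  refine ⟨_, tendsto_intervalIntegral_rpow_mul_deriv hp hT hd hS hM
    (intervalIntegral_tendsto_integral_Ioi T
      (integrableOn_Ioi_rpow_mul_of_abs_le hq hT hC hM) tendsto_id), ?_⟩
  have hTp : 0 < T ^ p := Real.rpow_pos_of_pos hT p
  have hCT : |T ^ p * C T| ≤ M * T ^ p := by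
    rw [abs_mul, abs_of_pos hTp, mul_comm]
    exact mul_le_mul_of_nonneg_right (hM T) hTp.le
  have hpI : |p * I| ≤ M * T ^ p := by
    rw [abs_mul, abs_of_neg hp]
    calc -p * |I| ≤ -p * (M * (T ^ p / -p)) := mul_le_mul_of_nonneg_left hI (by linarith)
      _ = M * T ^ p := by field_simp [hp.ne]
  calc |-(T ^ p * C T) - p * I| ≤ |T ^ p * C T| + |p * I| := by
        simpa only [abs_neg] using abs_sub (-(T ^ p * C T)) (p * I)
    _ ≤ 2 * M * T ^ p := by linarith

end RpowMulBounded

section AffinePhase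

variable {a : ℝ} (b : ℝ)

lemma hasDerivAt_sin_affine_div (ha : a ≠ 0) (x : ℝ) :
    HasDerivAt (fun x => Real.sin (a * x + b) / a) (Real.cos (a * x + b)) x := by
  refine ((((hasDerivAt_id' x).const_mul a).add_const b).sin.div_const a).congr_deriv ?_
  field_simp

lemma hasDerivAt_neg_cos_affine_div (ha : a ≠ 0) (x : ℝ) :
    HasDerivAt (fun x => -(Real.cos (a * x + b) / a)) (Real.sin (a * x + b)) x := by
  refine ((((hasDerivAt_id' x).const_mul a).add_const b).cos.div_const a).neg.congr_deriv ?_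
  field_simp

lemma abs_sin_affine_div_le (ha : 0 < a) (x : ℝ) : |Real.sin (a * x + b) / a| ≤ 1 / a := by
  rw [abs_div, abs_of_pos ha]
  gcongr
  exact Real.abs_sin_le_one _

lemma abs_neg_cos_affine_div_le (ha : 0 < a) (x : ℝ) :
    |-(Real.cos (a * x + b) / a)| ≤ 1 / a := by
  rw [abs_neg, abs_div, abs_of_pos ha]
  gcongr
  exact Real.abs_cos_le_one _

end AffinePhase

theorem oscillatory_integral_estimate (a b c T : ℝ) (ha : 0 < a) (hc : 1 ≤ c) (hT : 0 < T) :
    ∃ L : ℝ,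
      Tendsto (fun R : ℝ => ∫ x in T..R, Real.sin (a * x + b) / x ^ c) atTop (nhds L) ∧
        |L - Real.cos (a * T + b) / (a * T ^ c)| ≤ 2 * c / (a ^ 2 * T ^ (c + 1)) := by
  have hc0 : 0 < c := by linarith
  obtain ⟨I, hI, hI_le⟩ := exists_tendsto_intervalIntegral_rpow_mul_deriv (p := -c - 1) (by linarith) hT
    (hasDerivAt_sin_affine_div b ha.ne') (by fun_prop) (abs_sin_affine_div_le b ha)
  have hI' : Tendsto (fun R => ∫ x in T..R, x ^ (-c - 1) * -(Real.cos (a * x + b) / a))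
      atTop (𝓝 (-(1 / a) * I)) := by
    refine (hI.const_mul _).congr fun R => ?_
    rw [← intervalIntegral.integral_const_mul]
    congr 1 with x
    ring
  refine ⟨_, (tendsto_intervalIntegral_rpow_mul_deriv (neg_neg_of_pos hc0) hT
    (hasDerivAt_neg_cos_affine_div b ha.ne') (by fun_prop) (abs_neg_cos_affine_div_le b ha)
    hI').congr' ?_, ?_⟩
  · filter_upwards [eventually_ge_atTop T] with R hR
    refine intervalIntegral.integral_congr fun x hx => ?_
    rw [uIcc_of_le hR] at hx
    simp only [Real.rpow_neg (hT.trans_le hx.1).le, div_eq_mul_inv, mul_comm]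
  · have hdiff : -(T ^ (-c) * -(Real.cos (a * T + b) / a)) - -c * (-(1 / a) * I)
        - Real.cos (a * T + b) / (a * T ^ c) = -(c / a * I) := by
      rw [Real.rpow_neg hT.le]; field_simp; ring
    rw [hdiff, abs_neg, abs_mul, abs_of_pos (div_pos hc0 ha)]
    calc c / a * |I| ≤ c / a * (2 * (1 / a) * T ^ (-c - 1)) := by gcongr
      _ = 2 * c / (a ^ 2 * T ^ (c + 1)) := by
        rw [← neg_add', Real.rpow_neg hT.le]; field_simp
end
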